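/- arXiv:1905.08872 — 5 statements merged into one kernel-verified Lean document; each statement's English description precedes it below -/
import Mathlib

section
/- For all real numbers a, b > 0, we have ((1 - e^{-a})(1 - e^{-b}))/(1 - e^{-(a+b)}) < ab/(a+b). -/
/-!
With `u = 1 - e^{-a}` and `v = 1 - e^{-b}` the left-hand side is `(u⁻¹ + v⁻¹ - 1)⁻¹` and the
right-hand side is `(a⁻¹ + b⁻¹)⁻¹`, so it suffices that `1/2 + x⁻¹ < (1 - e^{-x})⁻¹` for `x > 0`.
That is the Padé bound `(2 - x) e^x < 2 + x`, which for `0 < x < 2` follows from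
`x < log (1 + x/2) - log (1 - x/2)`, the first term of the series of `2 artanh (x/2)`.
-/

open Real

lemma two_mul_lt_log_one_add_sub_log_one_sub {y : ℝ} (hy₀ : 0 < y) (hy₁ : y < 1) :
    2 * y < log (1 + y) - log (1 - y) := by
  have hsum := hasSum_log_sub_log_of_abs_lt_one (abs_lt.mpr ⟨by linarith, hy₁⟩)
  have hpartial := sum_le_hasSum (Finset.range 2) (fun k _ => by positivity) hsum
  norm_num [Finset.sum_range_succ] at hpartial
  nlinarith [pow_pos hy₀ 3]

lemma two_sub_mul_exp_lt_two_add {x : ℝ} (hx : 0 < x) : (2 - x) * exp x < 2 + x := by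
  rcases le_or_gt 2 x with h2 | h2
  · nlinarith [exp_pos x]
  have hlog := two_mul_lt_log_one_add_sub_log_one_sub (y := x / 2) (by positivity) (by linarith)
  rw [← log_div (by linarith) (by linarith), mul_div_cancel₀ x two_ne_zero,
    lt_log_iff_exp_lt (by apply div_pos <;> linarith), lt_div_iff₀ (by linarith)] at hlog
  linarith

lemma half_add_inv_lt_inv_one_sub_exp_neg {x : ℝ} (hx : 0 < x) :
    1 / 2 + x⁻¹ < (1 - exp (-x))⁻¹ := by
  have hpade := two_sub_mul_exp_lt_two_add hx
  have hexp : 1 < exp x := one_lt_exp_iff.mpr hx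
  rw [exp_neg, inv_eq_one_div (1 - _), lt_div_iff₀ (sub_pos.mpr (inv_lt_one_of_one_lt₀ hexp))]
  field_simp
  nlinarith

theorem stmt_0 (a b : ℝ) (ha : 0 < a) (hb : 0 < b) :
    (1 - Real.exp (-a)) * (1 - Real.exp (-b)) / (1 - Real.exp (-(a + b)))
      < a * b / (a + b) := by
  have hu : 0 < 1 - exp (-a) := sub_pos.mpr (exp_lt_one_iff.mpr (neg_neg_of_pos ha))
  have hv : 0 < 1 - exp (-b) := sub_pos.mpr (exp_lt_one_iff.mpr (neg_neg_of_pos hb))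
  have key : a⁻¹ + b⁻¹ < (1 - exp (-a))⁻¹ + (1 - exp (-b))⁻¹ - 1 := by
    linarith [half_add_inv_lt_inv_one_sub_exp_neg ha, half_add_inv_lt_inv_one_sub_exp_neg hb]
  have hlhs : (1 - exp (-a)) * (1 - exp (-b)) / (1 - exp (-(a + b)))
      = ((1 - exp (-a))⁻¹ + (1 - exp (-b))⁻¹ - 1)⁻¹ := by
    rw [neg_add, exp_add]
    field_simp
    ring
  have hrhs : a * b / (a + b) = (a⁻¹ + b⁻¹)⁻¹ := by
    field_simp
    ring
  rw [hlhs, hrhs]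
  exact inv_strictAnti₀ (by positivity) key
end

section
/- Define f(a,b) := (1 - e^{-(a+b)})/((1 - e^{-a})(1 - e^{-b})) − 1/a − 1/b for a, b > 0. Then the partial derivative of f with respect to a is 1/a² + 1/(2 − 2·cosh(a)), and this quantity is strictly positive for all a > 0. -/
/-!
With `x = e^{-a}` and `y = e^{-b}`, the identity
`(1 - x y) / ((1 - x) (1 - y)) = 1 / (1 - x) + 1 / (1 - y) - 1` splits `f(a, b)` into
`g(a) + g(b) - 1` with `g(s) = 1 / (1 - e^{-s}) - 1 / s`, so `∂f/∂a = g'(a)`. Since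
`2 cosh a - 2 = (1 - e^{-a})² / e^{-a}`, the derivative of `1 / (1 - e^{-s})` is
`1 / (2 - 2 cosh a)`. Positivity of `g'(a)` is `a² < 2 cosh a - 2 = 4 sinh² (a / 2)`,
i.e. `|a / 2| < |sinh (a / 2)|`.
-/

open Real Filter Topology

lemma one_sub_mul_div_one_sub_mul_one_sub {K : Type*} [Field K] {x y : K} (hx : x ≠ 1)
    (hy : y ≠ 1) : (1 - x * y) / ((1 - x) * (1 - y)) = 1 / (1 - x) + 1 / (1 - y) - 1 := by
  have hx' : 1 - x ≠ 0 := sub_ne_zero.2 hx.symm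
  have hy' : 1 - y ≠ 0 := sub_ne_zero.2 hy.symm
  field_simp
  ring

lemma exp_neg_ne_one {x : ℝ} (hx : x ≠ 0) : exp (-x) ≠ 1 := by
  rwa [Ne, exp_eq_one_iff, neg_eq_zero]

lemma two_sub_two_mul_cosh (x : ℝ) : 2 - 2 * cosh x = -(1 - exp (-x)) ^ 2 / exp (-x) := by
  rw [cosh_eq, exp_neg]
  field_simp
  ring

lemma hasDerivAt_one_div_one_sub_exp_neg_sub_one_div {x : ℝ} (hx : x ≠ 0) :
    HasDerivAt (fun s => 1 / (1 - exp (-s)) - 1 / s) (1 / x ^ 2 + 1 / (2 - 2 * cosh x)) x := by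
  have hne : 1 - exp (-x) ≠ 0 := sub_ne_zero.2 (exp_neg_ne_one hx).symm
  have h := (((hasDerivAt_neg x).exp.const_sub 1).inv hne).sub (hasDerivAt_inv hx)
  simp only [one_div]
  refine h.congr_deriv ?_
  rw [two_sub_two_mul_cosh]
  field_simp
  ring

lemma sq_lt_two_mul_cosh_sub_two {x : ℝ} (hx : x ≠ 0) : x ^ 2 < 2 * cosh x - 2 := by
  wlog hpos : 0 < x generalizing x
  · simpa using this (neg_ne_zero.2 hx) (neg_pos.2 ((not_lt.1 hpos).lt_of_ne hx))
  have hsinh : x / 2 < sinh (x / 2) := self_lt_sinh_iff.2 (by positivity)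
  have hcosh : cosh x = 2 * sinh (x / 2) ^ 2 + 1 := by
    have h := cosh_two_mul (x / 2)
    rw [mul_div_cancel₀ x two_ne_zero, cosh_sq] at h
    linarith
  nlinarith

lemma one_div_sq_add_one_div_two_sub_two_mul_cosh_pos {x : ℝ} (hx : x ≠ 0) :
    0 < 1 / x ^ 2 + 1 / (2 - 2 * cosh x) := by
  have h : 1 / (2 * cosh x - 2) < 1 / x ^ 2 :=
    one_div_lt_one_div_of_lt (by positivity) (sq_lt_two_mul_cosh_sub_two hx)
  rw [← neg_sub, one_div_neg_eq_neg_one_div]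
  linarith

theorem stmt_2 (a b : ℝ) (ha : 0 < a) (hb : 0 < b) :
    HasDerivAt
      (fun s : ℝ =>
        (1 - Real.exp (-(s + b))) / ((1 - Real.exp (-s)) * (1 - Real.exp (-b)))
          - 1 / s - 1 / b)
      (1 / a ^ 2 + 1 / (2 - 2 * Real.cosh a)) a ∧
    0 < 1 / a ^ 2 + 1 / (2 - 2 * Real.cosh a) := by
  refine ⟨?_, one_div_sq_add_one_div_two_sub_two_mul_cosh_pos ha.ne'⟩
  have hsplit : (fun s : ℝ =>
      (1 - exp (-(s + b))) / ((1 - exp (-s)) * (1 - exp (-b))) - 1 / s - 1 / b) =ᶠ[𝓝 a]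
      fun s => (1 / (1 - exp (-s)) - 1 / s) + (1 / (1 - exp (-b)) - 1 / b - 1) := by
    filter_upwards [lt_mem_nhds ha] with s hs
    rw [neg_add, exp_add, one_sub_mul_div_one_sub_mul_one_sub (exp_neg_ne_one hs.ne')
      (exp_neg_ne_one hb.ne')]
    ring
  exact ((hasDerivAt_one_div_one_sub_exp_neg_sub_one_div ha.ne').add_const _).congr_of_eventuallyEq
    hsplit
end

section
/- Consider two scalar systems ẋᵢ = aᵢ − bᵢ·xᵢ with bᵢ > 0 (i = 1,2), and suppose there exist reals v, w and times t₁, t₂ > 0 such that the solution of the first system starting at v reaches w at time t₁, and the solution of the second system starting at w reaches v at time t₂. Then w − v = (c₁ − c₂)·((1 − e^{−b₁t₁})(1 − e^{−b₂t₂}))/(1 − e^{−b₁t₁ − b₂t₂}), where cᵢ := aᵢ/bᵢ. -/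
/-! Each flow map of `ẋ = a - b x` is the affine contraction `x ↦ E x + c (1 - E)` towards the
equilibrium `c = a / b`, with `E = e^{-bt}`. The point `v` is a fixed point of the composition of
the two flow maps, an affine map of slope `E₁ E₂ ≠ 1`, and solving this linear equation gives
`w - v`. -/

open Real

theorem linearODE_eq_of_hasDerivAt {a b : ℝ} (hb : b ≠ 0) {x : ℝ → ℝ}
    (hx : ∀ t, HasDerivAt x (a - b * x t) t) (t : ℝ) :
    x t = exp (-b * t) * x 0 + a / b * (1 - exp (-b * t)) := by
  set g : ℝ → ℝ := fun s => exp (b * s) * (x s - a / b)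
  have hg' : ∀ s, HasDerivAt g 0 s := by
    intro s
    have hexp : HasDerivAt (fun s => exp (b * s)) (exp (b * s) * b) s := by
      simpa using ((hasDerivAt_id s).const_mul b).exp
    refine (hexp.mul ((hx s).sub_const (a / b))).congr_deriv ?_
    field_simp
    ring
  have hconst : g t = g 0 :=
    is_const_of_deriv_eq_zero (fun s => (hg' s).differentiableAt) (fun s => (hg' s).deriv) t 0
  have hinv : exp (-b * t) * exp (b * t) = 1 := by rw [← exp_add]; simp
  simp only [g, mul_zero, exp_zero, one_mul] at hconst
  linear_combination exp (-b * t) * hconst - (x t - a / b) * hinv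

theorem sub_eq_of_affine_two_cycle {E₁ E₂ c₁ c₂ v w : ℝ} (h : E₁ * E₂ ≠ 1)
    (hw : w = E₁ * v + c₁ * (1 - E₁)) (hv : v = E₂ * w + c₂ * (1 - E₂)) :
    w - v = (c₁ - c₂) * ((1 - E₁) * (1 - E₂)) / (1 - E₁ * E₂) := by
  have hden : 1 - E₁ * E₂ ≠ 0 := sub_ne_zero.mpr h.symm
  rw [eq_div_iff hden]
  linear_combination (1 - E₂) * hw - (1 - E₁) * hv

theorem stmt_5 (a₁ a₂ b₁ b₂ v w t₁ t₂ : ℝ)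
    (hb₁ : 0 < b₁) (hb₂ : 0 < b₂) (ht₁ : 0 < t₁) (ht₂ : 0 < t₂)
    (x₁ x₂ : ℝ → ℝ)
    (hx₁ : ∀ t, HasDerivAt x₁ (a₁ - b₁ * x₁ t) t)
    (hx₂ : ∀ t, HasDerivAt x₂ (a₂ - b₂ * x₂ t) t)
    (h₁0 : x₁ 0 = v) (h₁1 : x₁ t₁ = w)
    (h₂0 : x₂ 0 = w) (h₂1 : x₂ t₂ = v) :
    w - v = (a₁ / b₁ - a₂ / b₂) *
      ((1 - Real.exp (-b₁ * t₁)) * (1 - Real.exp (-b₂ * t₂))) /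
        (1 - Real.exp (-b₁ * t₁ - b₂ * t₂)) := by
  have hw := linearODE_eq_of_hasDerivAt hb₁.ne' hx₁ t₁
  have hv := linearODE_eq_of_hasDerivAt hb₂.ne' hx₂ t₂
  rw [h₁0, h₁1] at hw
  rw [h₂0, h₂1] at hv
  have hprod : exp (-b₁ * t₁ - b₂ * t₂) = exp (-b₁ * t₁) * exp (-b₂ * t₂) := by
    rw [← exp_add]; ring_nf
  have hslope : exp (-b₁ * t₁) * exp (-b₂ * t₂) ≠ 1 := by
    rw [← hprod]
    exact (Real.exp_lt_one_iff.mpr (by nlinarith)).ne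
  rw [hprod]
  exact sub_eq_of_affine_two_cycle hslope hw hv
end

section
/- With the setting of the previous two-system loop (ẋᵢ = aᵢ − bᵢxᵢ, bᵢ > 0, solution from v reaches w in time t₁ under system 1, solution from w reaches v in time t₂ under system 2), if additionally c₁ > c₂ where cᵢ = aᵢ/bᵢ, then w − v < (c₁ − c₂)·(b₁t₁·b₂t₂)/(b₁t₁ + b₂t₂). -/
/-!
Along `ẋ = a - b x` the quantity `(x t - a / b) * exp (b * t)` is conserved, so with
`cᵢ = aᵢ / bᵢ`, `sᵢ = bᵢ tᵢ` and `Eᵢ = exp sᵢ` the loop gives `(w - c₁) E₁ = v - c₁` and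
`(v - c₂) E₂ = w - c₂`. Eliminating `v` yields
`w - v = (c₁ - c₂) (E₁ - 1) (E₂ - 1) / (E₁ E₂ - 1) = 2 (c₁ - c₂) / (coth (s₁/2) + coth (s₂/2))`,
and `coth u > 1 / u` bounds this by `(c₁ - c₂)` times the harmonic-mean term `s₁ s₂ / (s₁ + s₂)`.
-/

open Real

lemma affineODE_sub_div_mul_exp_eq {a b : ℝ} (hb : b ≠ 0) {x : ℝ → ℝ}
    (hx : ∀ t, HasDerivAt x (a - b * x t) t) (T : ℝ) :
    (x T - a / b) * exp (b * T) = x 0 - a / b := by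
  have hderiv : ∀ t, HasDerivAt (fun t => (x t - a / b) * exp (b * t)) 0 t := by
    intro t
    have hexp : HasDerivAt (fun t => exp (b * t)) (exp (b * t) * b) t := by
      simpa using ((hasDerivAt_id t).const_mul b).exp
    refine ((hx t).sub_const (a / b) |>.mul hexp).congr_deriv ?_
    linear_combination (-exp (b * t)) * div_mul_cancel₀ a hb
  simpa using is_const_of_deriv_eq_zero (fun t => (hderiv t).differentiableAt)
    (fun t => (hderiv t).deriv) T 0

lemma sinh_lt_self_mul_cosh {u : ℝ} (hu : 0 < u) : sinh u < u * cosh u := by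
  have hmono : StrictMonoOn (fun x => x * cosh x - sinh x) (Set.Ici 0) := by
    refine strictMonoOn_of_deriv_pos (convex_Ici 0) (by fun_prop) fun x hx => ?_
    rw [interior_Ici, Set.mem_Ioi] at hx
    have hd : HasDerivAt (fun x => x * cosh x - sinh x) (1 * cosh x + x * sinh x - cosh x) x :=
      ((hasDerivAt_id x).mul (hasDerivAt_cosh x)).sub (hasDerivAt_sinh x)
    rw [hd.deriv]
    nlinarith [sinh_pos_iff.2 hx]
  simpa using hmono Set.self_mem_Ici (Set.mem_Ici.2 hu.le) hu

/-- `tanh (s / 2) < s / 2`, written in terms of `exp s`. -/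
lemma two_mul_exp_sub_one_lt {s : ℝ} (hs : 0 < s) : 2 * (exp s - 1) < s * (exp s + 1) := by
  have h := sinh_lt_self_mul_cosh (half_pos hs)
  rw [sinh_eq, cosh_eq] at h
  have hsq : exp (s / 2) * exp (s / 2) = exp s := by rw [← exp_add, add_halves]
  have hinv : exp (s / 2) * exp (-(s / 2)) = 1 := by rw [← exp_add, add_neg_cancel, exp_zero]
  nlinarith [mul_lt_mul_of_pos_left h (exp_pos (s / 2))]

lemma exp_sub_one_mul_exp_sub_one_div_lt {s₁ s₂ : ℝ} (hs₁ : 0 < s₁) (hs₂ : 0 < s₂) :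
    (exp s₁ - 1) * (exp s₂ - 1) / (exp (s₁ + s₂) - 1) < s₁ * s₂ / (s₁ + s₂) := by
  have hE₁ : 0 < exp s₁ - 1 := sub_pos.2 (one_lt_exp_iff.2 hs₁)
  have hE₂ : 0 < exp s₂ - 1 := sub_pos.2 (one_lt_exp_iff.2 hs₂)
  rw [div_lt_div_iff₀ (sub_pos.2 (one_lt_exp_iff.2 (add_pos hs₁ hs₂))) (add_pos hs₁ hs₂),
    exp_add]
  -- `2 (E₁ E₂ - 1) = (E₁ - 1)(E₂ + 1) + (E₁ + 1)(E₂ - 1)`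
  nlinarith [mul_lt_mul_of_pos_left (two_mul_exp_sub_one_lt hs₁) (mul_pos hs₂ hE₂),
    mul_lt_mul_of_pos_left (two_mul_exp_sub_one_lt hs₂) (mul_pos hs₁ hE₁)]

lemma sub_eq_of_mul_eq_of_mul_eq {v w c₁ c₂ E₁ E₂ : ℝ} (hE : E₁ * E₂ ≠ 1)
    (h₁ : (w - c₁) * E₁ = v - c₁) (h₂ : (v - c₂) * E₂ = w - c₂) :
    w - v = (c₁ - c₂) * ((E₁ - 1) * (E₂ - 1) / (E₁ * E₂ - 1)) := by
  rw [mul_div_assoc', eq_div_iff (sub_ne_zero.2 hE)]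
  linear_combination (E₂ - 1) * h₁ + (1 - E₁) * h₂

theorem stmt_6 (a₁ a₂ b₁ b₂ v w t₁ t₂ : ℝ)
    (hb₁ : 0 < b₁) (hb₂ : 0 < b₂) (ht₁ : 0 < t₁) (ht₂ : 0 < t₂)
    (hc : a₁ / b₁ > a₂ / b₂)
    (x₁ x₂ : ℝ → ℝ)
    (hx₁ : ∀ t, HasDerivAt x₁ (a₁ - b₁ * x₁ t) t)
    (hx₂ : ∀ t, HasDerivAt x₂ (a₂ - b₂ * x₂ t) t)
    (h₁0 : x₁ 0 = v) (h₁1 : x₁ t₁ = w)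
    (h₂0 : x₂ 0 = w) (h₂1 : x₂ t₂ = v) :
    w - v < (a₁ / b₁ - a₂ / b₂) * (b₁ * t₁ * (b₂ * t₂)) / (b₁ * t₁ + b₂ * t₂) := by
  have hs₁ : 0 < b₁ * t₁ := mul_pos hb₁ ht₁
  have hs₂ : 0 < b₂ * t₂ := mul_pos hb₂ ht₂
  have hloop₁ := affineODE_sub_div_mul_exp_eq hb₁.ne' hx₁ t₁
  have hloop₂ := affineODE_sub_div_mul_exp_eq hb₂.ne' hx₂ t₂
  rw [h₁0, h₁1] at hloop₁
  rw [h₂0, h₂1] at hloop₂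
  have hE : exp (b₁ * t₁) * exp (b₂ * t₂) ≠ 1 := by
    rw [← exp_add]; exact (one_lt_exp_iff.2 (add_pos hs₁ hs₂)).ne'
  calc w - v
      = (a₁ / b₁ - a₂ / b₂) * ((exp (b₁ * t₁) - 1) * (exp (b₂ * t₂) - 1) /
          (exp (b₁ * t₁ + b₂ * t₂) - 1)) := by
        rw [exp_add]; exact sub_eq_of_mul_eq_of_mul_eq hE hloop₁ hloop₂
    _ < (a₁ / b₁ - a₂ / b₂) * (b₁ * t₁ * (b₂ * t₂) / (b₁ * t₁ + b₂ * t₂)) :=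
        mul_lt_mul_of_pos_left (exp_sub_one_mul_exp_sub_one_div_lt hs₁ hs₂) (sub_pos.2 hc)
    _ = _ := (mul_div_assoc ..).symm
end

section
/- Consider a two-phase periodic bang-bang inflow: x solves ẋ = a₊ − b₊x on [0, t₊] and ẋ = a₋ − b₋x on [t₊, t₊+t₋], with x(0) = x(t₊ + t₋) = v and x(t₊) = w, where a± = σ̄ ± ε, b± = σ̄ + λ ± ε, σ̄ > ε > 0, λ > 0, t₊, t₋ > 0, and the zero-average constraint t₊ = t₋ =: τ holds. Then (1/(2τ))·∫₀^{2τ} x(t) dt < σ̄/(σ̄ + λ). -/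
/-!
On each phase `x` relaxes exponentially towards the phase equilibrium `a± / b±`, and integrating
the ODE gives `b± ∫ x = a± τ ∓ (w - v)`. Hence the period average equals the mean of the two
equilibria, which lies below `σ̄ / (σ̄ + λ)` by `ε² λ / ((σ̄ + λ) b₊ b₋)`, plus the correction
`ε (w - v) / (b₊ b₋ τ)`. Periodicity forces
`w - v = (a₊ / b₊ - a₋ / b₋) (1 - E) (1 - F) / (1 - E F)` with `E = exp (-b₊ τ)`,
`F = exp (-b₋ τ)`, and `tanh (u / 2) < u / 2` shows that the correction is smaller than the gap.
-/

open Real Set intervalIntegral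

-- `tanh (u / 2) < u / 2`
theorem two_mul_one_sub_exp_neg_lt_mul {u : ℝ} (hu : 0 < u) :
    2 * (1 - exp (-u)) < u * (1 + exp (-u)) := by
  let g : ℝ → ℝ := fun u ↦ (u - 2) * exp u + u + 2
  have hg : ∀ t, HasDerivAt g ((t - 1) * exp t + 1) t := fun t ↦ by
    refine ((((hasDerivAt_id t).sub_const 2).mul (hasDerivAt_exp t)).add
      (hasDerivAt_id t)).add_const 2 |>.congr_deriv ?_
    simp only [id]; ring
  have hg_mono : StrictMonoOn g (Ici 0) := by
    refine strictMonoOn_of_deriv_pos (convex_Ici 0) (by fun_prop) fun t ht ↦ ?_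
    rw [interior_Ici, mem_Ioi] at ht
    have h := mul_lt_mul_of_pos_right (add_one_lt_exp (neg_ne_zero.2 ht.ne')) (exp_pos t)
    rw [← exp_add, neg_add_cancel, exp_zero] at h
    rw [(hg t).deriv]
    linarith
  have hgu : g 0 < g u := hg_mono self_mem_Ici hu.le hu
  simp only [g, exp_zero] at hgu
  have h := exp_add u (-u)
  rw [add_neg_cancel, exp_zero] at h
  nlinarith [mul_pos (sub_pos.2 hgu) (exp_pos (-u))]

section LinearRelaxation

variable {a b t₀ t₁ : ℝ} {x : ℝ → ℝ}

theorem eq_add_mul_exp_of_hasDerivWithinAt_sub_mul (hb : b ≠ 0)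
    (hx : ∀ t ∈ Icc t₀ t₁, HasDerivWithinAt x (a - b * x t) (Icc t₀ t₁) t) {t : ℝ}
    (ht : t ∈ Icc t₀ t₁) : x t = a / b + (x t₀ - a / b) * exp (-(b * (t - t₀))) := by
  let y : ℝ → ℝ := fun t ↦ (x t - a / b) * exp (b * (t - t₀))
  have hy : ∀ t ∈ Icc t₀ t₁, HasDerivWithinAt y 0 (Icc t₀ t₁) t := fun t ht ↦ by
    have he : HasDerivAt (fun s ↦ exp (b * (s - t₀))) (exp (b * (t - t₀)) * (b * 1)) t :=
      (((hasDerivAt_id t).sub_const t₀).const_mul b).exp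
    refine ((hx t ht).sub_const (a / b)).mul he.hasDerivWithinAt |>.congr_deriv ?_
    field_simp
    ring
  have hy_const : y t = y t₀ := by
    refine constant_of_has_deriv_right_zero (fun s hs ↦ (hy s hs).continuousWithinAt)
      (fun s hs ↦ ?_) t ht
    exact (hy s (Ico_subset_Icc_self hs)).mono_of_mem_nhdsWithin (Icc_mem_nhdsGE_of_mem hs)
  simp only [y, sub_self, mul_zero, exp_zero, mul_one] at hy_const
  rw [exp_neg, ← hy_const]
  field_simp
  ring

theorem intervalIntegrable_of_hasDerivWithinAt {f' : ℝ → ℝ} (ht : t₀ ≤ t₁)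
    (hx : ∀ t ∈ Icc t₀ t₁, HasDerivWithinAt x (f' t) (Icc t₀ t₁) t) :
    IntervalIntegrable x MeasureTheory.volume t₀ t₁ :=
  ContinuousOn.intervalIntegrable_of_Icc ht fun t ht ↦ (hx t ht).continuousWithinAt

theorem mul_integral_eq_of_hasDerivWithinAt_sub_mul (ht : t₀ ≤ t₁)
    (hx : ∀ t ∈ Icc t₀ t₁, HasDerivWithinAt x (a - b * x t) (Icc t₀ t₁) t) :
    b * ∫ t in t₀..t₁, x t = a * (t₁ - t₀) - (x t₁ - x t₀) := by
  have hint := intervalIntegrable_of_hasDerivWithinAt ht hx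
  have hftc : ∫ t in t₀..t₁, (a - b * x t) = x t₁ - x t₀ :=
    integral_eq_sub_of_hasDerivAt_of_le ht (fun t ht ↦ (hx t ht).continuousWithinAt)
      (fun t ht ↦ (hx t (Ioo_subset_Icc_self ht)).hasDerivAt (Icc_mem_nhds ht.1 ht.2))
      (intervalIntegrable_const.sub (hint.const_mul b))
  rw [integral_sub intervalIntegrable_const (hint.const_mul b), integral_const,
    integral_const_mul, smul_eq_mul] at hftc
  linarith

end LinearRelaxation

theorem add_mul_one_sub_exp_neg_mul_lt {p q : ℝ} (hp : 0 < p) (hq : 0 < q) :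
    (p + q) * ((1 - exp (-p)) * (1 - exp (-q))) < p * q * (1 - exp (-p) * exp (-q)) := by
  have hE : 0 < 1 - exp (-p) := sub_pos.2 (exp_lt_one_iff.2 (neg_lt_zero.2 hp))
  have hF : 0 < 1 - exp (-q) := sub_pos.2 (exp_lt_one_iff.2 (neg_lt_zero.2 hq))
  -- split `2 (1 - E F) = (1 - E)(1 + F) + (1 + E)(1 - F)` and bound each `1 ± ·` factor
  have hp' := mul_lt_mul_of_pos_left (two_mul_one_sub_exp_neg_lt_mul hp) (mul_pos hq hF)
  have hq' := mul_lt_mul_of_pos_left (two_mul_one_sub_exp_neg_lt_mul hq) (mul_pos hp hE)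
  nlinarith

theorem sub_mul_one_sub_mul_eq_of_two_cycle {α γ E F v w : ℝ} (hw : w = α + (v - α) * E)
    (hv : v = γ + (w - γ) * F) : (w - v) * (1 - E * F) = (α - γ) * ((1 - E) * (1 - F)) := by
  linear_combination (1 - F) * hw + (E - 1) * hv

section BangBang

variable {σbar lam ε τ : ℝ}

theorem rise_lt_of_two_cycle (hlam : 0 < lam) (hε : 0 < ε) (hεσ : ε < σbar) (hτ : 0 < τ)
    {v w : ℝ}
    (hw : w = (σbar + ε) / (σbar + lam + ε) +
      (v - (σbar + ε) / (σbar + lam + ε)) * exp (-((σbar + lam + ε) * τ)))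
    (hv : v = (σbar - ε) / (σbar + lam - ε) +
      (w - (σbar - ε) / (σbar + lam - ε)) * exp (-((σbar + lam - ε) * τ))) :
    (σbar + lam) * (w - v) < τ * ε * lam := by
  have hb : 0 < σbar + lam + ε := by linarith
  have hd : 0 < σbar + lam - ε := by linarith
  set E := exp (-((σbar + lam + ε) * τ))
  set F := exp (-((σbar + lam - ε) * τ))
  have hEF : 0 < 1 - E * F := by
    rw [← exp_add, sub_pos, exp_lt_one_iff]
    nlinarith
  have hrise : (w - v) * (1 - E * F) * ((σbar + lam + ε) * (σbar + lam - ε)) =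
      2 * ε * lam * ((1 - E) * (1 - F)) := by
    rw [sub_mul_one_sub_mul_eq_of_two_cycle hw hv]
    field_simp
    ring
  have key : (2 * (σbar + lam)) * ((1 - E) * (1 - F)) <
      τ * ((σbar + lam + ε) * (σbar + lam - ε)) * (1 - E * F) := by
    have := add_mul_one_sub_exp_neg_mul_lt (mul_pos hb hτ) (mul_pos hd hτ)
    refine lt_of_mul_lt_mul_left ?_ hτ.le
    linear_combination this
  refine lt_of_mul_lt_mul_right (a := (1 - E * F) * ((σbar + lam + ε) * (σbar + lam - ε))) ?_
    (by positivity)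
  calc (σbar + lam) * (w - v) * ((1 - E * F) * ((σbar + lam + ε) * (σbar + lam - ε)))
      = ε * lam * (2 * (σbar + lam) * ((1 - E) * (1 - F))) := by
        linear_combination (σbar + lam) * hrise
    _ < ε * lam * (τ * ((σbar + lam + ε) * (σbar + lam - ε)) * (1 - E * F)) := by gcongr
    _ = τ * ε * lam * ((1 - E * F) * ((σbar + lam + ε) * (σbar + lam - ε))) := by ring

theorem average_lt_of_rise_lt (hlam : 0 < lam) (hε : 0 < ε) (hεσ : ε < σbar) (hτ : 0 < τ)
    {I₁ I₂ δ : ℝ} (h₁ : (σbar + lam + ε) * I₁ = (σbar + ε) * τ - δ)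
    (h₂ : (σbar + lam - ε) * I₂ = (σbar - ε) * τ + δ) (hδ : (σbar + lam) * δ < τ * ε * lam) :
    1 / (2 * τ) * (I₁ + I₂) < σbar / (σbar + lam) := by
  have hbd : 0 < (σbar + lam + ε) * (σbar + lam - ε) := mul_pos (by linarith) (by linarith)
  have hsum : (σbar + lam) * (I₁ + I₂) * ((σbar + lam + ε) * (σbar + lam - ε)) =
      σbar * (2 * τ) * ((σbar + lam + ε) * (σbar + lam - ε)) -
        2 * ε * (τ * ε * lam - (σbar + lam) * δ) := by
    linear_combination (σbar + lam) * (σbar + lam - ε) * h₁ + (σbar + lam) * (σbar + lam + ε) * h₂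
  rw [one_div_mul_eq_div, div_lt_div_iff₀ (by positivity) (by linarith), mul_comm _ (σbar + lam)]
  refine lt_of_mul_lt_mul_right ?_ hbd.le
  rw [hsum]
  linarith [mul_pos (mul_pos two_pos hε) (sub_pos.2 hδ)]

end BangBang

theorem stmt_14_general (σbar lam ε τ : ℝ) (hlam : 0 < lam)
    (hε : 0 < ε) (hεσ : ε < σbar) (hτ : 0 < τ)
    (x : ℝ → ℝ)
    (hxp : ∀ t ∈ Set.Icc 0 τ,
      HasDerivWithinAt x ((σbar + ε) - (σbar + lam + ε) * x t) (Set.Icc 0 τ) t)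
    (hxm : ∀ t ∈ Set.Icc τ (2 * τ),
      HasDerivWithinAt x ((σbar - ε) - (σbar + lam - ε) * x t) (Set.Icc τ (2 * τ)) t)
    (hper : x 0 = x (2 * τ)) :
    (1 / (2 * τ)) * ∫ t in (0:ℝ)..(2 * τ), x t < σbar / (σbar + lam) := by
  have hτ₂ : τ ≤ 2 * τ := by linarith
  have hb : σbar + lam + ε ≠ 0 := by linarith
  have hd : σbar + lam - ε ≠ 0 := by linarith
  have hw := eq_add_mul_exp_of_hasDerivWithinAt_sub_mul hb hxp (right_mem_Icc.2 hτ.le)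
  have hv := eq_add_mul_exp_of_hasDerivWithinAt_sub_mul hd hxm (right_mem_Icc.2 hτ₂)
  have hI₁ := mul_integral_eq_of_hasDerivWithinAt_sub_mul hτ.le hxp
  have hI₂ := mul_integral_eq_of_hasDerivWithinAt_sub_mul hτ₂ hxm
  rw [sub_zero] at hw hI₁
  rw [← hper, show 2 * τ - τ = τ by ring] at hv hI₂
  rw [← integral_add_adjacent_intervals (intervalIntegrable_of_hasDerivWithinAt hτ.le hxp)
    (intervalIntegrable_of_hasDerivWithinAt hτ₂ hxm)]
  exact average_lt_of_rise_lt hlam hε hεσ hτ hI₁ (by rw [hI₂]; ring)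
    (rise_lt_of_two_cycle hlam hε hεσ hτ hw hv)

theorem stmt_14 (σbar lam ε τ : ℝ) (hσ : 0 < σbar) (hlam : 0 < lam)
    (hε : 0 < ε) (hεσ : ε < σbar) (hτ : 0 < τ)
    (x : ℝ → ℝ)
    (hxp : ∀ t ∈ Set.Icc 0 τ,
      HasDerivWithinAt x ((σbar + ε) - (σbar + lam + ε) * x t) (Set.Icc 0 τ) t)
    (hxm : ∀ t ∈ Set.Icc τ (2 * τ),
      HasDerivWithinAt x ((σbar - ε) - (σbar + lam - ε) * x t) (Set.Icc τ (2 * τ)) t)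
    (hper : x 0 = x (2 * τ)) :
    (1 / (2 * τ)) * ∫ t in (0:ℝ)..(2 * τ), x t < σbar / (σbar + lam) :=
  stmt_14_general σbar lam ε τ hlam hε hεσ hτ x hxp hxm hper
end
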